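/- arXiv:1809.07375 — 4 statements merged into one kernel-verified Lean document; each statement's English description precedes it below -/
import Mathlib

section
/- For every fixed real y > 0 and every real β with β > 0 and β ≠ 1, the function x ↦ ď_β(y, x) is convex on the open interval (0, ∞). -/
/-! `ď_β(y, ·)` is a nonnegative combination of `x ↦ x ^ β` (kept only for `β > 1`, where it is
convex) and `x ↦ -x ^ (β - 1) / (β - 1)` (kept only for `β ≤ 2`). The latter is convex because
`x ^ q` is convex on `(0, ∞)` for `q ≤ 0` (its second derivative `q (q - 1) x ^ (q - 2)` is
nonnegative) and concave for `0 ≤ q ≤ 1`. -/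

open Real

/-- The convex part `ď_β(y, x) = [β>1]·x^β/β − [β≤2]·y·x^(β−1)/(β−1) + y^β/(β(β−1))`. -/
noncomputable def betaDivCheck (β y x : ℝ) : ℝ :=
  (if 1 < β then x ^ β / β else 0) - (if β ≤ 2 then y * x ^ (β - 1) / (β - 1) else 0)
    + y ^ β / (β * (β - 1))

open Set

theorem convexOn_rpow_Ioi_of_nonpos {p : ℝ} (hp : p ≤ 0) :
    ConvexOn ℝ (Ioi 0) fun x : ℝ ↦ x ^ p := by
  have hdiff : ∀ q : ℝ, DifferentiableOn ℝ (fun x : ℝ ↦ x ^ q) (Ioi 0) := fun q ↦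
    (differentiableOn_rpow_const q).mono fun x hx ↦ (ne_of_gt hx : x ≠ 0)
  refine convexOn_of_deriv2_nonneg' (convex_Ioi 0) (hdiff p) ?_ fun x hx ↦ ?_
  · rw [deriv_rpow_const']
    exact (hdiff (p - 1)).const_mul p
  · rw [iter_deriv_rpow_const]
    have hpp : 0 ≤ p * (p - 1) := mul_nonneg_of_nonpos_of_nonpos hp (by linarith)
    simpa [descPochhammer_succ_right] using mul_nonneg hpp (rpow_nonneg hx.out.le (p - 2))

theorem convexOn_neg_mul_rpow_div {c p : ℝ} (hc : 0 ≤ c) (hp : p ≤ 1) :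
    ConvexOn ℝ (Ioi 0) fun x : ℝ ↦ -(c * x ^ p / p) := by
  rcases le_or_gt p 0 with hp₀ | hp₀
  · have hcp : 0 ≤ -(c / p) := neg_nonneg.2 (div_nonpos_of_nonneg_of_nonpos hc hp₀)
    refine ((convexOn_rpow_Ioi_of_nonpos hp₀).smul hcp).congr fun x _ ↦ ?_
    simp only [smul_eq_mul]
    ring
  · have hconc := ((concaveOn_rpow hp₀.le hp).subset Ioi_subset_Ici_self (convex_Ioi 0)).smul
      (div_nonneg hc hp₀.le)
    refine hconc.neg.congr fun x _ ↦ ?_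
    simp only [Pi.neg_apply, smul_eq_mul]
    ring

theorem betaDivCheck_convexOn_general (y : ℝ) (hy : 0 < y) (β : ℝ) :
    ConvexOn ℝ (Set.Ioi (0 : ℝ)) (fun x => betaDivCheck β y x) := by
  have hpow : ConvexOn ℝ (Ioi 0) fun x : ℝ ↦ if 1 < β then x ^ β / β else 0 := by
    split_ifs with h
    · simpa only [smul_eq_mul, inv_mul_eq_div] using ((convexOn_rpow h.le).subset
        Ioi_subset_Ici_self (convex_Ioi 0)).smul (inv_nonneg.2 (by linarith : (0:ℝ) ≤ β))
    · exact convexOn_const 0 (convex_Ioi 0)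
  have hcross : ConvexOn ℝ (Ioi 0)
      fun x : ℝ ↦ -(if β ≤ 2 then y * x ^ (β - 1) / (β - 1) else 0) := by
    split_ifs with h
    · exact convexOn_neg_mul_rpow_div hy.le (by linarith)
    · simpa using convexOn_const (0 : ℝ) (convex_Ioi (0 : ℝ))
  refine ((hpow.add hcross).add_const (y ^ β / (β * (β - 1)))).congr fun x _ ↦ ?_
  simp only [betaDivCheck, Pi.add_apply]
  ring

/-- For fixed `y > 0` and `β > 0`, `β ≠ 1`, the function `x ↦ ď_β(y, x)` is convex
on `(0, ∞)`. -/
theorem betaDivCheck_convexOn (y : ℝ) (hy : 0 < y) (β : ℝ) (hβ : 0 < β) (hβ1 : β ≠ 1) :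
    ConvexOn ℝ (Set.Ioi (0 : ℝ)) (fun x => betaDivCheck β y x) :=
  betaDivCheck_convexOn_general y hy β
end

section
/- For all fixed reals y > 0 and x > 0, the β-divergence d_β(y, x) tends to the Itakura–Saito divergence y/x − log(y/x) − 1 as β tends to 0 from the right (along values β > 0). -/
/-!
After clearing denominators, `(β - 1) d_β(y, x)` is the difference of the slopes
`(a ^ β - 1) / β` of `β ↦ a ^ β` at `0` for `a = y, x`, which tend to `log y` and `log x`,
plus `x ^ β - y x ^ (β - 1)`, which is continuous at `β = 0` with value `1 - y / x`.
-/

open Real Filter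

/-- The β-divergence `d_β(y, x)` for `β > 0`, `β ≠ 1`, `y > 0`, `x > 0`. -/
noncomputable def betaDiv (β y x : ℝ) : ℝ :=
  y * (y ^ (β - 1) - x ^ (β - 1)) / (β * (β - 1)) + x ^ (β - 1) * (x - y) / β

open Topology

theorem Real.tendsto_rpow_sub_one_div_nhdsNE {a : ℝ} (ha : 0 < a) :
    Tendsto (fun t => (a ^ t - 1) / t) (𝓝[≠] 0) (𝓝 (log a)) := by
  simpa [div_eq_inv_mul] using
    (hasStrictDerivAt_const_rpow ha 0).hasDerivAt.tendsto_slope_zero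

theorem betaDiv_eq_div_sub_one {β y x : ℝ} (hβ : β ≠ 0) (hβ₁ : β ≠ 1) (hy : y ≠ 0)
    (hx : x ≠ 0) :
    betaDiv β y x =
      ((y ^ β - 1) / β - (x ^ β - 1) / β + (x ^ β - y * x ^ (β - 1))) / (β - 1) := by
  have hβ₁' : β - 1 ≠ 0 := sub_ne_zero.mpr hβ₁
  rw [betaDiv, rpow_sub_one hy, rpow_sub_one hx]
  field_simp
  ring

theorem Real.tendsto_rpow_sub_mul_rpow_sub_one {x : ℝ} (hx : 0 < x) (y : ℝ) :
    Tendsto (fun β : ℝ => x ^ β - y * x ^ (β - 1)) (𝓝 0) (𝓝 (1 - y / x)) := by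
  have hcont : Continuous fun β : ℝ => x ^ β - y * x ^ (β - 1) := by
    fun_prop (disch := exact hx.ne')
  simpa [rpow_neg_one, div_eq_mul_inv] using hcont.tendsto 0

/-- As `β → 0⁺`, the β-divergence `d_β(y, x)` tends to the Itakura–Saito divergence
`y/x − log(y/x) − 1`. -/
theorem betaDiv_tendsto_IS (y x : ℝ) (hy : 0 < y) (hx : 0 < x) :
    Tendsto (fun β => betaDiv β y x) (nhdsWithin 0 (Set.Ioi (0 : ℝ)))
      (nhds (y / x - Real.log (y / x) - 1)) := by
  have hslopes := ((tendsto_rpow_sub_one_div_nhdsNE hy).sub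
    (tendsto_rpow_sub_one_div_nhdsNE hx)).mono_left (nhdsGT_le_nhdsNE 0)
  have hrest := (tendsto_rpow_sub_mul_rpow_sub_one hx y).mono_left
    (nhdsWithin_le_nhds (s := Set.Ioi 0))
  have hden : Tendsto (fun β : ℝ => β - 1) (𝓝[>] 0) (𝓝 (0 - 1)) :=
    (tendsto_nhdsWithin_of_tendsto_nhds tendsto_id).sub_const 1
  have hlim := (hslopes.add hrest).div hden (by norm_num)
  rw [log_div hy.ne' hx.ne']
  rw [show (log y - log x + (1 - y / x)) / (0 - 1) = y / x - (log y - log x) - 1 by ring] at hlim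
  refine hlim.congr' ?_
  filter_upwards [Ioo_mem_nhdsGT (zero_lt_one' ℝ)] with β hβ
  exact (betaDiv_eq_div_sub_one hβ.1.ne' hβ.2.ne hy.ne' hx.ne').symm
end

section
/- For every real β with β > 0 and β ≠ 1 and all reals y > 0, x > 0, the β-divergence is nonnegative: d_β(y, x) ≥ 0; moreover d_β(y, x) = 0 if and only if x = y. -/
open Real

theorem betaDiv_self (β x : ℝ) : betaDiv β x x = 0 := by
  simp [betaDiv]

theorem betaDiv_mul_mul (β : ℝ) {c y x : ℝ} (hc : 0 < c) (hy : 0 ≤ y) (hx : 0 ≤ x) :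
    betaDiv β (c * y) (c * x) = c ^ β * betaDiv β y x := by
  have hcβ : c ^ β = c ^ (β - 1) * c := by
    rw [← rpow_add_one hc.ne', sub_add_cancel]
  simp only [betaDiv, mul_rpow hc.le hy, mul_rpow hc.le hx, hcβ]
  ring

theorem betaDiv_one (β t : ℝ) (hβ : β ≠ 0) (hβ1 : β ≠ 1) (ht : 0 ≤ t) :
    betaDiv β t 1 = (t ^ β - (1 + β * (t - 1))) / (β * (β - 1)) := by
  have htβ : t ^ β = t * t ^ (β - 1) := by
    rw [mul_comm, ← rpow_add_one' ht (by rwa [sub_add_cancel]), sub_add_cancel]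
  have hβ1' : β - 1 ≠ 0 := sub_ne_zero.mpr hβ1
  rw [betaDiv, one_rpow, htβ]
  field_simp
  ring

theorem betaDiv_one_pos {β t : ℝ} (hβ : 0 < β) (hβ1 : β ≠ 1) (ht : 0 < t) (ht1 : t ≠ 1) :
    0 < betaDiv β t 1 := by
  have hs : -1 ≤ t - 1 := by linarith
  have hs0 : t - 1 ≠ 0 := sub_ne_zero.mpr ht1
  rw [betaDiv_one β t hβ.ne' hβ1 ht.le]
  rcases hβ1.lt_or_gt with hlt | hgt
  · have := rpow_one_add_lt_one_add_mul_self hs hs0 hβ hlt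
    rw [add_sub_cancel] at this
    exact div_pos_of_neg_of_neg (by linarith) (mul_neg_of_pos_of_neg hβ (by linarith))
  · have := one_add_mul_self_lt_rpow_one_add hs hs0 hgt
    rw [add_sub_cancel] at this
    exact div_pos (by linarith) (mul_pos hβ (by linarith))

theorem betaDiv_pos {β y x : ℝ} (hβ : 0 < β) (hβ1 : β ≠ 1) (hy : 0 < y) (hx : 0 < x)
    (hxy : x ≠ y) : 0 < betaDiv β y x := by
  have hscale : betaDiv β y x = x ^ β * betaDiv β (y / x) 1 := by
    rw [← betaDiv_mul_mul β hx (div_pos hy hx).le zero_le_one, mul_div_cancel₀ y hx.ne', mul_one]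
  rw [hscale]
  refine mul_pos (rpow_pos_of_pos hx β) (betaDiv_one_pos hβ hβ1 (div_pos hy hx) ?_)
  rwa [ne_eq, div_eq_one_iff_eq hx.ne', eq_comm]

/-- Nonnegativity of the β-divergence, with equality to zero iff `x = y`. -/
theorem betaDiv_nonneg_and_eq_zero_iff (β : ℝ) (hβ : 0 < β) (hβ1 : β ≠ 1)
    (y x : ℝ) (hy : 0 < y) (hx : 0 < x) :
    0 ≤ betaDiv β y x ∧ (betaDiv β y x = 0 ↔ x = y) := by
  rcases eq_or_ne x y with rfl | hxy
  · simp only [betaDiv_self, le_refl, true_and]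
  · have hpos := betaDiv_pos hβ hβ1 hy hx hxy
    exact ⟨hpos.le, iff_of_false hpos.ne' hxy⟩
end

section
/- Let M ≥ 2 be an integer, let L be the (M−1)×M finite-difference matrix, let A be an M×M real diagonal matrix whose diagonal entries are all nonnegative and at least one of which is strictly positive, let λ > 0, and let b ∈ ℝ^M have all entries nonnegative. Then the linear system (A + 2λ·LᵀL)·h = b has a unique solution h ∈ ℝ^M, and every entry of h is nonnegative. -/
/-!
`Q = A + 2λ LᵀL` has nonpositive off-diagonal entries, and its quadratic form
`∑ Aᵢᵢ xᵢ² + 2λ ‖L x‖²` is positive definite: it vanishes only if `L x = 0`, i.e. `x` is constant,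
and then the positive entry of `A` forces `x = 0`. Positive definiteness gives unique solvability.
For nonnegativity, split `h = h⁺ - h⁻`: the sign pattern of `Q` gives `⟪h⁻, Q h⁺⟫ ≤ 0`, so
`⟪h⁻, Q h⁻⟫ = ⟪h⁻, Q h⁺⟫ - ⟪h⁻, b⟫ ≤ 0`, whence `h⁻ = 0`.
-/

open Matrix

/-- The finite-difference matrix `L ∈ ℝ^{(M−1)×M}`, with `(L v)_m = v_{m+1} − v_m`. -/
def finiteDiffMatrix (M : ℕ) : Matrix (Fin (M - 1)) (Fin M) ℝ :=
  Matrix.of fun i j => if (j : ℕ) = (i : ℕ) then -1 else if (j : ℕ) = (i : ℕ) + 1 then 1 else 0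

namespace Matrix

variable {n : Type*} [Fintype n]

theorem mulVec_injective_of_dotProduct_mulVec_pos {Q : Matrix n n ℝ}
    (hQ : ∀ x ≠ 0, 0 < x ⬝ᵥ Q *ᵥ x) : Function.Injective Q.mulVec := by
  refine (injective_iff_map_eq_zero Q.mulVecLin).mpr fun x hx => ?_
  by_contra hx0
  simpa [show Q *ᵥ x = 0 from hx] using hQ x hx0

theorem nonneg_of_mulVec_nonneg {Q : Matrix n n ℝ} (hQ : ∀ x ≠ 0, 0 < x ⬝ᵥ Q *ᵥ x)
    (hoff : Pairwise fun i j => Q i j ≤ 0) {h : n → ℝ} (hh : 0 ≤ Q *ᵥ h) : 0 ≤ h := by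
  have cross : h⁻ ⬝ᵥ Q *ᵥ h⁺ ≤ 0 := by
    simp only [dotProduct, mulVec, Finset.mul_sum]
    refine Finset.sum_nonpos fun i _ => Finset.sum_nonpos fun j _ => ?_
    rcases eq_or_ne i j with rfl | hij
    · rcases le_total (h i) 0 with hi | hi <;> simp [hi]
    · exact mul_nonpos_of_nonneg_of_nonpos (negPart_nonneg _)
        (mul_nonpos_of_nonpos_of_nonneg (hoff hij) (posPart_nonneg _))
  have hneg : h⁻ ⬝ᵥ Q *ᵥ h⁻ ≤ 0 := by
    have hsplit : h⁻ = h⁺ - h :=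
      eq_sub_of_add_eq (sub_eq_iff_eq_add'.mp (posPart_sub_negPart h)).symm
    calc h⁻ ⬝ᵥ Q *ᵥ h⁻ = h⁻ ⬝ᵥ Q *ᵥ (h⁺ - h) := by rw [← hsplit]
      _ = h⁻ ⬝ᵥ Q *ᵥ h⁺ - h⁻ ⬝ᵥ Q *ᵥ h := by rw [mulVec_sub, dotProduct_sub]
      _ ≤ 0 := by linarith [dotProduct_nonneg_of_nonneg (negPart_nonneg h) hh]
  have hneg0 : h⁻ = 0 := by
    by_contra hne
    exact (hQ _ hne).not_ge hneg
  rw [← posPart_sub_negPart h, hneg0, sub_zero]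
  exact posPart_nonneg h

theorem dotProduct_transpose_mul_self_mulVec {m : Type*} [Fintype m] (L : Matrix m n ℝ)
    (x : n → ℝ) : x ⬝ᵥ (Lᵀ * L) *ᵥ x = (L *ᵥ x) ⬝ᵥ (L *ᵥ x) := by
  rw [← mulVec_mulVec, dotProduct_mulVec, vecMul_transpose]

theorem dotProduct_diagonal_mulVec_self [DecidableEq n] (d x : n → ℝ) :
    x ⬝ᵥ diagonal d *ᵥ x = ∑ i, d i * x i ^ 2 := by
  simp only [dotProduct, mulVec_diagonal]
  exact Finset.sum_congr rfl fun i _ => by ring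

end Matrix

theorem finiteDiffMatrix_succ_mulVec_apply {n : ℕ} (x : Fin (n + 1) → ℝ) (i : Fin n) :
    (finiteDiffMatrix (n + 1) *ᵥ x) i = x i.succ - x i.castSucc := by
  rw [mulVec, dotProduct, Fintype.sum_eq_add i.castSucc i.succ (Fin.castSucc_lt_succ (i := i)).ne]
  · simp [finiteDiffMatrix]
    ring
  · rintro j ⟨hj₁, hj₂⟩
    rw [Ne, Fin.ext_iff, Fin.val_castSucc] at hj₁
    rw [Ne, Fin.ext_iff, Fin.val_succ] at hj₂
    simp only [finiteDiffMatrix, of_apply]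
    rw [if_neg hj₁, if_neg hj₂, zero_mul]

theorem eq_of_finiteDiffMatrix_mulVec_eq_zero {n : ℕ} {x : Fin (n + 1) → ℝ}
    (hx : finiteDiffMatrix (n + 1) *ᵥ x = 0) (i : Fin (n + 1)) : x i = x 0 := by
  induction i using Fin.induction with
  | zero => rfl
  | succ i ih =>
    have := congrFun hx i
    rw [finiteDiffMatrix_succ_mulVec_apply, Pi.zero_apply, sub_eq_zero] at this
    rw [this, ih]

theorem finiteDiffMatrix_apply_mul_apply_nonpos {M : ℕ} (m : Fin (M - 1)) {i j : Fin M}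
    (hij : i ≠ j) : finiteDiffMatrix M m i * finiteDiffMatrix M m j ≤ 0 := by
  have : (i : ℕ) ≠ j := Fin.val_ne_of_ne hij
  simp only [finiteDiffMatrix, of_apply]
  split_ifs <;> first | omega | norm_num

theorem transpose_finiteDiffMatrix_mul_self_apply_nonpos {M : ℕ} {i j : Fin M} (hij : i ≠ j) :
    ((finiteDiffMatrix M)ᵀ * finiteDiffMatrix M) i j ≤ 0 :=
  (mul_apply ..).trans_le <|
    Finset.sum_nonpos fun m _ => finiteDiffMatrix_apply_mul_apply_nonpos m hij

theorem dotProduct_diagonal_add_finiteDiff_mulVec_pos {M : ℕ} {d : Fin M → ℝ} (hd : 0 ≤ d)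
    {i₀ : Fin M} (hi₀ : 0 < d i₀) {c : ℝ} (hc : 0 < c) {x : Fin M → ℝ} (hx : x ≠ 0) :
    0 < x ⬝ᵥ (diagonal d + c • ((finiteDiffMatrix M)ᵀ * finiteDiffMatrix M)) *ᵥ x := by
  obtain ⟨n, rfl⟩ : ∃ n, M = n + 1 := Nat.exists_eq_add_one.mpr i₀.pos
  rw [add_mulVec, dotProduct_add, smul_mulVec, dotProduct_smul, smul_eq_mul,
    dotProduct_transpose_mul_self_mulVec, dotProduct_diagonal_mulVec_self]
  have hdiag : 0 ≤ ∑ i, d i * x i ^ 2 :=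
    Finset.sum_nonneg fun i _ => mul_nonneg (hd i) (sq_nonneg _)
  have hdiff : 0 ≤ (finiteDiffMatrix (n + 1) *ᵥ x) ⬝ᵥ (finiteDiffMatrix (n + 1) *ᵥ x) :=
    dotProduct_self_star_nonneg _
  refine lt_of_le_of_ne (add_nonneg hdiag (mul_nonneg hc.le hdiff)) fun hzero => hx ?_
  obtain ⟨hdiag0, hdiff0⟩ :=
    (add_eq_zero_iff_of_nonneg hdiag (mul_nonneg hc.le hdiff)).mp hzero.symm
  have hconst := eq_of_finiteDiffMatrix_mulVec_eq_zero <|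
    dotProduct_self_eq_zero.mp <| (mul_eq_zero.mp hdiff0).resolve_left hc.ne'
  have hxi₀ : x i₀ = 0 := by
    have := (Finset.sum_eq_zero_iff_of_nonneg fun i _ => mul_nonneg (hd i) (sq_nonneg (x i))).mp
      hdiag0 i₀ (Finset.mem_univ _)
    exact pow_eq_zero_iff two_ne_zero |>.mp ((mul_eq_zero.mp this).resolve_left hi₀.ne')
  funext i
  rw [hconst i, Pi.zero_apply, ← hconst i₀, hxi₀]

theorem linear_system_unique_nonneg_solution_general
    (M : ℕ) (A : Matrix (Fin M) (Fin M) ℝ)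
    (hA_offdiag : ∀ i j, i ≠ j → A i j = 0)
    (hA_nonneg : ∀ i, 0 ≤ A i i)
    (hA_pos : ∃ i, 0 < A i i)
    (lam : ℝ) (hlam : 0 < lam)
    (b : Fin M → ℝ) (hb : ∀ i, 0 ≤ b i) :
    (∃! h : Fin M → ℝ,
        (A + (2 * lam) • ((finiteDiffMatrix M)ᵀ * finiteDiffMatrix M)).mulVec h = b)
    ∧ (∀ h : Fin M → ℝ,
        (A + (2 * lam) • ((finiteDiffMatrix M)ᵀ * finiteDiffMatrix M)).mulVec h = b →
        ∀ i, 0 ≤ h i) := by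
  obtain ⟨i₀, hi₀⟩ := hA_pos
  rw [← IsDiag.diagonal_diag (A := A) hA_offdiag]
  set Q := diagonal A.diag + (2 * lam) • ((finiteDiffMatrix M)ᵀ * finiteDiffMatrix M)
  have hQ : ∀ x ≠ 0, 0 < x ⬝ᵥ Q *ᵥ x := fun x hx =>
    dotProduct_diagonal_add_finiteDiff_mulVec_pos hA_nonneg hi₀ (by positivity) hx
  have hoff : Pairwise fun i j => Q i j ≤ 0 := fun i j hij => by
    simpa [Q, diagonal_apply_ne _ hij] using mul_nonpos_of_nonneg_of_nonpos (by positivity)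
      (transpose_finiteDiffMatrix_mul_self_apply_nonpos hij)
  have hinj := mulVec_injective_of_dotProduct_mulVec_pos hQ
  have hbij : Function.Bijective Q.mulVec :=
    ⟨hinj, mulVec_surjective_iff_isUnit.mpr (mulVec_injective_iff_isUnit.mp hinj)⟩
  exact ⟨hbij.existsUnique b, fun h hh => nonneg_of_mulVec_nonneg hQ hoff (hh ▸ hb)⟩

/-- If `A` is diagonal with nonnegative entries, at least one of which is positive,
`λ > 0`, and `b` has nonnegative entries, then the linear system `(A + 2λ·LᵀL)·h = b`
has a unique solution, and every entry of that solution is nonnegative. -/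
theorem linear_system_unique_nonneg_solution
    (M : ℕ) (hM : 2 ≤ M) (A : Matrix (Fin M) (Fin M) ℝ)
    (hA_offdiag : ∀ i j, i ≠ j → A i j = 0)
    (hA_nonneg : ∀ i, 0 ≤ A i i)
    (hA_pos : ∃ i, 0 < A i i)
    (lam : ℝ) (hlam : 0 < lam)
    (b : Fin M → ℝ) (hb : ∀ i, 0 ≤ b i) :
    (∃! h : Fin M → ℝ,
        (A + (2 * lam) • ((finiteDiffMatrix M)ᵀ * finiteDiffMatrix M)).mulVec h = b)
    ∧ (∀ h : Fin M → ℝ,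
        (A + (2 * lam) • ((finiteDiffMatrix M)ᵀ * finiteDiffMatrix M)).mulVec h = b →
        ∀ i, 0 ≤ h i) :=
  linear_system_unique_nonneg_solution_general M A hA_offdiag hA_nonneg hA_pos lam hlam b hb
end
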